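/- (Algebraic form of Proposition 5.2.) Let v ∈ Δ_{p+1,q+1} \ {0} and let Q̂ := {x = (x₁,x₂) ∈ ℝ^{p+1}×ℝ^{q+1} : |x₁| = |x₂| = 1} (Euclidean norms). Suppose x ∈ Q̂ satisfies x·v = 0. Then {y ∈ Q̂ : y·v = 0} = {x, −x} ∪ {cos(t)·x + sin(t)·d : t ∈ ℝ, d = (d₁,d₂) ∈ ℝ^{p+1}×ℝ^{q+1}, ⟨d₁,x₁⟩_eucl = ⟨d₂,x₂⟩_eucl = 0, |d₁| = |d₂| = 1, d·v = 0}. -/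

import Mathlib

/-!
Clifford multiplication satisfies `x·y + y·x = -2⟨x,y⟩_{p+1,q+1}`: on the generators `Φ(e_i)`,
Kronecker products of `T, g₁, g₂, E`, two distinct ones anticommute in exactly one slot. Hence
two vectors annihilating a spinor `v ≠ 0` are orthogonal. For `x, y ∈ Q̂` this says `⟨x₁,y₁⟩ = ⟨x₂,y₂⟩ =: c`, hence `|c| ≤ 1`.
If `c = ±1`, Cauchy–Schwarz is an equality in both blocks and `y = ±x`. Otherwise
`d = (y - c x) / √(1 - c²)` is a unit vector in both blocks, orthogonal to `x` there, annihilates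
`v` since the annihilator of `v` is a linear subspace, and `y = cos t · x + sin t · d` for
`t = arccos c`. The converse is the same computation read backwards.
-/

open Complex Matrix

namespace Paper

noncomputable section

/-- The 2×2 generator matrices of Remark 2.1. -/
def matE : Matrix (Fin 2) (Fin 2) ℂ := 1
def matT : Matrix (Fin 2) (Fin 2) ℂ := !![-1, 0; 0, 1]
def matG1 : Matrix (Fin 2) (Fin 2) ℂ := !![0, Complex.I; Complex.I, 0]
def matG2 : Matrix (Fin 2) (Fin 2) ℂ := !![0, -1; 1, 0]

/-- Iterated Kronecker product of 2×2 matrices, realised on the index type `Fin m → Fin 2`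
(the slot `ν` corresponds to the `(ν+1)`-st label of the basis spinors `u(ε₁,…,ε_m)`,
i.e. the Kronecker factors are taken from right to left). -/
def tprod {m : ℕ} (M : Fin m → Matrix (Fin 2) (Fin 2) ℂ) :
    Matrix (Fin m → Fin 2) (Fin m → Fin 2) ℂ :=
  Matrix.of fun a b => ∏ ν, M ν (a ν) (b ν)

/-- `τ_j = 1` if `ε_j = 1` and `τ_j = i` if `ε_j = -1`. -/
def tau {n : ℕ} (ε : Fin n → ℝ) (j : Fin n) : ℂ := if ε j = 1 then 1 else Complex.I

/-- The matrices `Φ_{p,q}(e_i)` of the explicit Clifford representation of Remark 2.1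
(0-based index `i`; the paper's `e_{2j-1}` resp. `e_{2j}` correspond to `i = 2j-2` resp.
`i = 2j-1`, acting by `g₁` resp. `g₂` in slot `j-1`, by `T` in the lower slots and by `E`
in the higher slots).  For odd `n` the last matrix is the first component
`pr₁ ∘ Φ̃ (e_n) = τ_n · (i T ⊗ ⋯ ⊗ T)`. -/
def Phi {n : ℕ} (ε : Fin n → ℝ) (i : Fin n) :
    Matrix (Fin (n / 2) → Fin 2) (Fin (n / 2) → Fin 2) ℂ :=
  tau ε i •
    if i.val < 2 * (n / 2) then
      tprod fun ν : Fin (n / 2) =>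
        if ν.val < i.val / 2 then matT
        else if ν.val = i.val / 2 then (if i.val % 2 = 0 then matG1 else matG2)
        else matE
    else Complex.I • tprod fun _ : Fin (n / 2) => matT

/-- The spinor module `Δ_{p,q} = ℂ^{2^{⌊n/2⌋}}`. -/
abbrev Spinor (n : ℕ) := (Fin (n / 2) → Fin 2) → ℂ

/-- Clifford multiplication by a real vector, as a matrix. -/
def cliffR {n : ℕ} (ε : Fin n → ℝ) (x : Fin n → ℝ) :
    Matrix (Fin (n / 2) → Fin 2) (Fin (n / 2) → Fin 2) ℂ :=
  ∑ i, (x i : ℂ) • Phi ε i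

/-- Clifford multiplication by a complex vector (complex-bilinear extension). -/
def cliffC {n : ℕ} (ε : Fin n → ℝ) (x : Fin n → ℂ) :
    Matrix (Fin (n / 2) → Fin 2) (Fin (n / 2) → Fin 2) ℂ :=
  ∑ i, x i • Phi ε i

/-- The scalar product `⟨x,y⟩_{p,q} = ∑ ε_i x_i y_i` on `ℝⁿ`. -/
def ipR {n : ℕ} (ε : Fin n → ℝ) (x y : Fin n → ℝ) : ℝ := ∑ i, ε i * x i * y i

/-- Its complex-bilinear extension to `ℂⁿ`. -/
def ipC {n : ℕ} (ε : Fin n → ℝ) (x y : Fin n → ℂ) : ℂ := ∑ i, (ε i : ℂ) * x i * y i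

/-- The standard Hermitian scalar product on the spinor module. -/
def stdInner {n : ℕ} (u v : Spinor n) : ℂ := ∑ b, (starRingEnd ℂ) (u b) * v b

/-- Clifford multiplication by the product `e_{i₁} ⋯ e_{i_k}` over a set of indices
`s = {i₁ < … < i_k}`, taken in increasing order. -/
def cliffSet {n : ℕ} (ε : Fin n → ℝ) (s : Finset (Fin n)) :
    Matrix (Fin (n / 2) → Fin 2) (Fin (n / 2) → Fin 2) ℂ :=
  ((s.sort (· ≤ ·)).map (Phi ε)).prod

/-- The set of indices with `ε_i = -1`. -/
def negSet {n : ℕ} (ε : Fin n → ℝ) : Finset (Fin n) := Finset.univ.filter fun i => ε i = -1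

/-- The indefinite spinor inner product `⟨u,v⟩_Δ = d · (e_{i₁} ⋯ e_{i_p} · u, v)`,
where `i₁ < … < i_p` are the indices with `ε = -1`. -/
def sform {n : ℕ} (ε : Fin n → ℝ) (d : ℂ) (u v : Spinor n) : ℂ :=
  d * stdInner ((cliffSet ε (negSet ε)).mulVec u) v

/-- The coefficient `d_{k,p} · ε_{i₁} ⋯ ε_{i_k} · ⟨e_{i₁} ⋯ e_{i_k} · χ, χ⟩_Δ` of the
algebraic Dirac form (`dD` is the constant of the spinor inner product, `dk` is `d_{k,p}`). -/
def dCoeff {n : ℕ} (ε : Fin n → ℝ) (dD dk : ℂ) (s : Finset (Fin n)) (χ : Spinor n) : ℂ :=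
  dk * (∏ i ∈ s, (ε i : ℂ)) * sform ε dD ((cliffSet ε s).mulVec χ) χ

/-- The covector `X^♭ = ⟨X,·⟩_{p,q}`. -/
def flat {n : ℕ} (ε : Fin n → ℝ) (X : Fin n → ℝ) : (Fin n → ℝ) →ₗ[ℝ] ℝ :=
  ∑ i, (ε i * X i) • LinearMap.proj i

/-- The wedge product of `k` one-forms, as an alternating `k`-form. -/
def wedge1 {n k : ℕ} (f : Fin k → ((Fin n → ℝ) →ₗ[ℝ] ℝ)) :
    AlternatingMap ℝ (Fin n → ℝ) ℝ (Fin k) :=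
  (Matrix.detRowAlternating : AlternatingMap ℝ (Fin k → ℝ) ℝ (Fin k)).compLinearMap
    (LinearMap.pi f)

/-- The algebraic Dirac `k`-form
`α^k_χ = d_{k,p} ∑_{i₁<⋯<i_k} ε_{i₁}⋯ε_{i_k} ⟨e_{i₁}⋯e_{i_k}·χ, χ⟩_Δ e^♭_{i₁} ∧ ⋯ ∧ e^♭_{i_k}`
(a real form; the coefficients are real by the choice of the constant `dk = d_{k,p}`). -/
def diracForm {n : ℕ} (ε : Fin n → ℝ) (dD dk : ℂ) (k : ℕ) (χ : Spinor n) :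
    AlternatingMap ℝ (Fin n → ℝ) ℝ (Fin k) :=
  ∑ s : Finset (Fin n),
    if h : s.card = k then
      (dCoeff ε dD dk s χ).re •
        wedge1 fun j => flat ε (Pi.single (s.orderEmbOfFin h j) 1)
    else 0

/-- The wedge product of `j` one-forms with a `(p-j)`-form, as an alternating `p`-form. -/
def wedgeMix {n p j : ℕ} (h : j ≤ p) (f : Fin j → ((Fin n → ℝ) →ₗ[ℝ] ℝ))
    (β : AlternatingMap ℝ (Fin n → ℝ) ℝ (Fin (p - j))) :
    AlternatingMap ℝ (Fin n → ℝ) ℝ (Fin p) :=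
  AlternatingMap.domDomCongr (finSumFinEquiv.trans (finCongr (by omega)))
    ((TensorProduct.lid ℝ ℝ).toLinearMap.compAlternatingMap ((wedge1 f).domCoprod β))

/-- The basis spinor `u(ε₁,…,ε_m)` (encoded by `a : Fin m → Fin 2`, where `a ν = 0`
corresponds to the label `ε_{ν+1} = 1` and `a ν = 1` to `ε_{ν+1} = -1`). -/
def uB (n : ℕ) (a : Fin (n / 2) → Fin 2) : Spinor n := fun b => if b = a then 1 else 0

end

end Paper

namespace Paper

noncomputable section

lemma matT_mul_self : matT * matT = 1 := by
  ext i j; fin_cases i <;> fin_cases j <;> simp [matT, Matrix.mul_apply, Fin.sum_univ_two]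

lemma matG1_mul_self : matG1 * matG1 = -1 := by
  ext i j; fin_cases i <;> fin_cases j <;> simp [matG1, Matrix.mul_apply, Fin.sum_univ_two]

lemma matG2_mul_self : matG2 * matG2 = -1 := by
  ext i j; fin_cases i <;> fin_cases j <;> simp [matG2, Matrix.mul_apply, Fin.sum_univ_two]

lemma matG1_mul_matG2 : matG1 * matG2 = -(matG2 * matG1) := by
  ext i j; fin_cases i <;> fin_cases j <;> simp [matG1, matG2, Matrix.mul_apply, Fin.sum_univ_two]

lemma matG1_mul_matT : matG1 * matT = -(matT * matG1) := by
  ext i j; fin_cases i <;> fin_cases j <;> simp [matG1, matT, Matrix.mul_apply, Fin.sum_univ_two]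

lemma matG2_mul_matT : matG2 * matT = -(matT * matG2) := by
  ext i j; fin_cases i <;> fin_cases j <;> simp [matG2, matT, Matrix.mul_apply, Fin.sum_univ_two]

lemma tprod_mul {m : ℕ} (M N : Fin m → Matrix (Fin 2) (Fin 2) ℂ) :
    tprod M * tprod N = tprod (M * N) := by
  ext a b
  simp only [tprod, Matrix.mul_apply, Matrix.of_apply, Pi.mul_apply]
  rw [Finset.prod_univ_sum, Fintype.piFinset_univ]
  exact Finset.sum_congr rfl fun c _ => Finset.prod_mul_distrib.symm

lemma tprod_smul {m : ℕ} (s : Fin m → ℂ) (M : Fin m → Matrix (Fin 2) (Fin 2) ℂ) :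
    tprod (fun ν => s ν • M ν) = (∏ ν, s ν) • tprod M := by
  ext a b
  simp [tprod, Finset.prod_mul_distrib]

lemma tprod_one {m : ℕ} : tprod (fun _ : Fin m => (1 : Matrix (Fin 2) (Fin 2) ℂ)) = 1 := by
  ext a b
  simp only [tprod, Matrix.of_apply, Matrix.one_apply]
  rw [Finset.prod_boole]
  simp [funext_iff]

lemma prod_ite_val_eq_neg_one {m k : ℕ} (hk : k < m) :
    ∏ ν : Fin m, (if ν.val = k then (-1 : ℂ) else 1) = -1 := by
  simp_rw [← Fin.ext_iff (b := ⟨k, hk⟩)]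
  simp

def phiFactor (n : ℕ) (i : Fin n) (ν : Fin (n / 2)) : Matrix (Fin 2) (Fin 2) ℂ :=
  if i.val < 2 * (n / 2) then
    if ν.val < i.val / 2 then matT
    else if ν.val = i.val / 2 then (if i.val % 2 = 0 then matG1 else matG2)
    else matE
  else matT

def phiScalar {n : ℕ} (ε : Fin n → ℝ) (i : Fin n) : ℂ :=
  tau ε i * if i.val < 2 * (n / 2) then 1 else Complex.I

lemma Phi_eq_smul_tprod {n : ℕ} (ε : Fin n → ℝ) (i : Fin n) :
    Phi ε i = phiScalar ε i • tprod (phiFactor n i) := by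
  unfold Phi phiScalar phiFactor
  split_ifs <;> simp [smul_smul]

lemma phiFactor_mul_self {n : ℕ} (i : Fin n) (ν : Fin (n / 2)) :
    phiFactor n i ν * phiFactor n i ν
      = (if i.val < 2 * (n / 2) ∧ ν.val = i.val / 2 then (-1 : ℂ) else 1) • 1 := by
  unfold phiFactor
  split_ifs <;> first | omega | simp_all [matT_mul_self, matG1_mul_self, matG2_mul_self, matE]

lemma phiFactor_mul_phiFactor {n : ℕ} {i j : Fin n} (hij : i.val < j.val) (ν : Fin (n / 2)) :
    phiFactor n i ν * phiFactor n j ν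
      = (if ν.val = i.val / 2 then (-1 : ℂ) else 1) • (phiFactor n j ν * phiFactor n i ν) := by
  unfold phiFactor
  split_ifs <;> first | omega | simp_all [matG1_mul_matG2, matG1_mul_matT, matG2_mul_matT, matE]

lemma tprod_phiFactor_mul_self {n : ℕ} (i : Fin n) :
    tprod (phiFactor n i) * tprod (phiFactor n i)
      = (if i.val < 2 * (n / 2) then (-1 : ℂ) else 1) • 1 := by
  rw [tprod_mul, show phiFactor n i * phiFactor n i = _ from funext (phiFactor_mul_self i),
    tprod_smul, tprod_one]
  congr 1
  split_ifs with hi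
  · simpa [hi] using prod_ite_val_eq_neg_one (m := n / 2) (k := i.val / 2) (by omega)
  · simp [hi]

lemma tprod_phiFactor_anticomm {n : ℕ} {i j : Fin n} (hij : i.val < j.val) :
    tprod (phiFactor n i) * tprod (phiFactor n j)
      = -(tprod (phiFactor n j) * tprod (phiFactor n i)) := by
  rw [tprod_mul, tprod_mul, show phiFactor n i * phiFactor n j = _ from
    funext (phiFactor_mul_phiFactor hij), tprod_smul,
    prod_ite_val_eq_neg_one (by have := j.isLt; omega), neg_one_smul]
  rfl

lemma tau_mul_self {n : ℕ} {ε : Fin n → ℝ} {i : Fin n} (hε : ε i = 1 ∨ ε i = -1) :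
    tau ε i * tau ε i = ε i := by
  rcases hε with h | h <;> norm_num [tau, h]

lemma Phi_mul_self {n : ℕ} {ε : Fin n → ℝ} {i : Fin n} (hε : ε i = 1 ∨ ε i = -1) :
    Phi ε i * Phi ε i = (-ε i : ℂ) • 1 := by
  rw [Phi_eq_smul_tprod, smul_mul_smul_comm, tprod_phiFactor_mul_self, smul_smul,
    phiScalar, mul_mul_mul_comm, tau_mul_self hε]
  split_ifs <;> simp

lemma Phi_anticomm {n : ℕ} (ε : Fin n → ℝ) {i j : Fin n} (hij : i ≠ j) :
    Phi ε i * Phi ε j = -(Phi ε j * Phi ε i) := by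
  simp only [Phi_eq_smul_tprod, smul_mul_smul_comm, ← smul_neg, mul_comm (phiScalar ε i)]
  congr 1
  rcases (Fin.val_ne_of_ne hij).lt_or_gt with h | h
  · exact tprod_phiFactor_anticomm h
  · rw [tprod_phiFactor_anticomm h, neg_neg]

lemma Phi_mul_add_mul {n : ℕ} {ε : Fin n → ℝ} (hε : ∀ i, ε i = 1 ∨ ε i = -1) (i j : Fin n) :
    Phi ε i * Phi ε j + Phi ε j * Phi ε i = (if i = j then (-2 * ε i : ℂ) else 0) • 1 := by
  split_ifs with h
  · subst h
    rw [Phi_mul_self (hε i), ← add_smul]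
    congr 1
    ring
  · rw [Phi_anticomm ε h, neg_add_cancel, zero_smul]

lemma cliffR_mul_add_mul {n : ℕ} {ε : Fin n → ℝ} (hε : ∀ i, ε i = 1 ∨ ε i = -1)
    (x y : Fin n → ℝ) :
    cliffR ε x * cliffR ε y + cliffR ε y * cliffR ε x = (-2 * ipR ε x y : ℂ) • 1 := by
  have hyx : cliffR ε y * cliffR ε x
      = ∑ i, ∑ j, ((x i : ℂ) * y j) • (Phi ε j * Phi ε i) := by
    rw [cliffR, cliffR, Finset.sum_mul_sum, Finset.sum_comm]
    simp_rw [smul_mul_smul_comm, mul_comm (y _ : ℂ)]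
  rw [hyx, cliffR, cliffR, Finset.sum_mul_sum]
  simp_rw [smul_mul_smul_comm, ← Finset.sum_add_distrib, ← smul_add, Phi_mul_add_mul hε,
    smul_smul, mul_ite, mul_zero, ite_smul, zero_smul, Finset.sum_ite_eq, Finset.mem_univ,
    if_true, ← Finset.sum_smul]
  congr 1
  simp only [ipR]
  push_cast
  rw [Finset.mul_sum]
  exact Finset.sum_congr rfl fun i _ => by ring

lemma cliffR_add {n : ℕ} (ε : Fin n → ℝ) (x y : Fin n → ℝ) :
    cliffR ε (x + y) = cliffR ε x + cliffR ε y := by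
  simp [cliffR, add_smul, Finset.sum_add_distrib]

lemma cliffR_smul {n : ℕ} (ε : Fin n → ℝ) (a : ℝ) (x : Fin n → ℝ) :
    cliffR ε (a • x) = (a : ℂ) • cliffR ε x := by
  simp only [cliffR, Finset.smul_sum, smul_smul, Pi.smul_apply, smul_eq_mul, Complex.ofReal_mul]

def cliffMulVec {n : ℕ} (ε : Fin n → ℝ) (v : Spinor n) : (Fin n → ℝ) →ₗ[ℝ] Spinor n where
  toFun x := (cliffR ε x).mulVec v
  map_add' x y := by rw [cliffR_add, Matrix.add_mulVec]
  map_smul' a x := by rw [cliffR_smul, Matrix.smul_mulVec, Complex.coe_smul]; rfl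

lemma ipR_eq_zero_of_mulVec_eq_zero {n : ℕ} {ε : Fin n → ℝ} (hε : ∀ i, ε i = 1 ∨ ε i = -1)
    {v : Spinor n} (hv : v ≠ 0) {x y : Fin n → ℝ}
    (hx : (cliffR ε x).mulVec v = 0) (hy : (cliffR ε y).mulVec v = 0) :
    ipR ε x y = 0 := by
  have h := congrArg (·.mulVec v) (cliffR_mul_add_mul hε x y)
  simp only [Matrix.add_mulVec, ← Matrix.mulVec_mulVec, hx, hy, Matrix.mulVec_zero, add_zero,
    Matrix.smul_mulVec, Matrix.one_mulVec] at h
  have := (smul_eq_zero.mp h.symm).resolve_right hv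
  exact_mod_cast (mul_eq_zero.mp this).resolve_left (by norm_num)

lemma ipR_eq_neg_sum_add_sum {n : ℕ} {ε : Fin n → ℝ} {P : Fin n → Prop} [DecidablePred P]
    (hε : ∀ i, ε i = if P i then -1 else 1) (x y : Fin n → ℝ) :
    ipR ε x y = -∑ i ∈ Finset.univ.filter P, x i * y i
      + ∑ i ∈ Finset.univ.filter (fun i => ¬ P i), x i * y i := by
  rw [ipR, ← Finset.sum_filter_add_sum_filter_not Finset.univ P, ← Finset.sum_neg_distrib]
  congr 1 <;> refine Finset.sum_congr rfl fun i hi => ?_ <;>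
    simp only [Finset.mem_filter] at hi <;> simp [hε i, hi.2]

section BlockSums

variable {ι : Type*} (s : Finset ι)

lemma sum_smul_add_smul_mul (a b : ℝ) (u w : ι → ℝ) :
    ∑ i ∈ s, (a • u + b • w) i * u i = a * ∑ i ∈ s, u i ^ 2 + b * ∑ i ∈ s, w i * u i := by
  simp only [Pi.add_apply, Pi.smul_apply, smul_eq_mul, Finset.mul_sum, ← Finset.sum_add_distrib]
  exact Finset.sum_congr rfl fun i _ => by ring

lemma sum_sq_smul_add_smul (a b : ℝ) (u w : ι → ℝ) :
    ∑ i ∈ s, (a • u + b • w) i ^ 2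
      = a ^ 2 * ∑ i ∈ s, u i ^ 2 + 2 * a * b * ∑ i ∈ s, w i * u i
        + b ^ 2 * ∑ i ∈ s, w i ^ 2 := by
  simp only [Pi.add_apply, Pi.smul_apply, smul_eq_mul, Finset.mul_sum, ← Finset.sum_add_distrib]
  exact Finset.sum_congr rfl fun i _ => by ring

variable {s} {x y : ι → ℝ} {c : ℝ}
  (hx : ∑ i ∈ s, x i ^ 2 = 1) (hy : ∑ i ∈ s, y i ^ 2 = 1) (hxy : ∑ i ∈ s, y i * x i = c)
include hx hy hxy

lemma sum_sq_neg_smul_add : ∑ i ∈ s, ((-c) • x + y) i ^ 2 = 1 - c ^ 2 := by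
  rw [← one_smul ℝ y, sum_sq_smul_add_smul, hx, hy, hxy]
  ring

lemma eq_mul_of_sq_eq_one (hc : c ^ 2 = 1) : ∀ i ∈ s, y i = c * x i := by
  have hsum := sum_sq_neg_smul_add hx hy hxy
  rw [hc, sub_self, Finset.sum_eq_zero_iff_of_nonneg fun j _ => sq_nonneg _] at hsum
  intro i hi
  have := pow_eq_zero_iff (n := 2) (by norm_num) |>.mp (hsum i hi)
  simp only [Pi.add_apply, Pi.smul_apply, smul_eq_mul] at this
  linarith

lemma sq_le_one_of_sum_mul : c ^ 2 ≤ 1 := by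
  have := Finset.sum_nonneg fun i (_ : i ∈ s) => sq_nonneg (((-c) • x + y) i)
  rw [sum_sq_neg_smul_add hx hy hxy] at this
  linarith

/-- `(-c / r) • x + r⁻¹ • y` is `(y - c x) / r`, the Gram–Schmidt normalisation of `y` against `x`
when `r = √(1 - c²)`. -/
lemma gramSchmidt_sums {r : ℝ} (hr : r ^ 2 = 1 - c ^ 2) (hr0 : r ≠ 0) :
    ∑ i ∈ s, ((-c / r) • x + r⁻¹ • y) i * x i = 0 ∧
      ∑ i ∈ s, ((-c / r) • x + r⁻¹ • y) i ^ 2 = 1 := by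
  rw [sum_smul_add_smul_mul, sum_sq_smul_add_smul, hx, hy, hxy]
  constructor
  · field_simp; ring
  · field_simp; linear_combination -hr

end BlockSums

lemma sum_sq_cos_smul_add_sin_smul {ι : Type*} {s : Finset ι} {x d : ι → ℝ}
    (hx : ∑ i ∈ s, x i ^ 2 = 1) (hd : ∑ i ∈ s, d i ^ 2 = 1) (hdx : ∑ i ∈ s, d i * x i = 0)
    (t : ℝ) : ∑ i ∈ s, (Real.cos t • x + Real.sin t • d) i ^ 2 = 1 := by
  rw [sum_sq_smul_add_smul, hx, hd, hdx]
  linear_combination Real.cos_sq_add_sin_sq t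

lemma eq_or_eq_neg_or_exists_great_circle {ι : Type*} [Fintype ι] (P : ι → Prop)
    [DecidablePred P] (K : Submodule ℝ (ι → ℝ)) {x y : ι → ℝ}
    (hx1 : ∑ i ∈ Finset.univ.filter P, x i ^ 2 = 1)
    (hx2 : ∑ i ∈ Finset.univ.filter (fun i => ¬ P i), x i ^ 2 = 1)
    (hy1 : ∑ i ∈ Finset.univ.filter P, y i ^ 2 = 1)
    (hy2 : ∑ i ∈ Finset.univ.filter (fun i => ¬ P i), y i ^ 2 = 1)
    (hxK : x ∈ K) (hyK : y ∈ K)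
    (hxy : ∑ i ∈ Finset.univ.filter P, y i * x i
      = ∑ i ∈ Finset.univ.filter (fun i => ¬ P i), y i * x i) :
    y = x ∨ y = -x ∨ ∃ (t : ℝ) (d : ι → ℝ),
      ∑ i ∈ Finset.univ.filter P, d i * x i = 0 ∧
      ∑ i ∈ Finset.univ.filter (fun i => ¬ P i), d i * x i = 0 ∧
      ∑ i ∈ Finset.univ.filter P, d i ^ 2 = 1 ∧
      ∑ i ∈ Finset.univ.filter (fun i => ¬ P i), d i ^ 2 = 1 ∧
      d ∈ K ∧ y = Real.cos t • x + Real.sin t • d := by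
  obtain ⟨c, hc1⟩ : ∃ c, ∑ i ∈ Finset.univ.filter P, y i * x i = c := ⟨_, rfl⟩
  have hc2 := hxy.symm.trans hc1
  by_cases hc : c ^ 2 = 1
  · have hyx : y = c • x := by
      funext i
      by_cases hi : P i
      · exact eq_mul_of_sq_eq_one hx1 hy1 hc1 hc i (by simpa using hi)
      · exact eq_mul_of_sq_eq_one hx2 hy2 hc2 hc i (by simpa using hi)
    rcases sq_eq_one_iff.mp hc with h | h
    · exact .inl (by rw [hyx, h, one_smul])
    · exact .inr (.inl (by rw [hyx, h, neg_one_smul]))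
  have hc_lt : c ^ 2 < 1 := (sq_le_one_of_sum_mul hx1 hy1 hc1).lt_of_ne hc
  set r := √(1 - c ^ 2)
  have hr : r ^ 2 = 1 - c ^ 2 := Real.sq_sqrt (by linarith)
  have hr0 : r ≠ 0 := (Real.sqrt_pos.mpr (by linarith)).ne'
  obtain ⟨hdx1, hd1⟩ := gramSchmidt_sums hx1 hy1 hc1 hr hr0
  obtain ⟨hdx2, hd2⟩ := gramSchmidt_sums hx2 hy2 hc2 hr hr0
  refine .inr (.inr ⟨Real.arccos c, _, hdx1, hdx2, hd1, hd2,
    K.add_mem (K.smul_mem _ hxK) (K.smul_mem _ hyK), ?_⟩)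
  rw [Real.cos_arccos (by nlinarith) (by nlinarith), Real.sin_arccos]
  funext i
  simp only [Pi.add_apply, Pi.smul_apply, smul_eq_mul]
  field_simp
  ring

/-- `ℝ^{p+1,q+1}` is realised as `ℝ^{p+q+2}`, the blocks `x₁, x₂` of `x` being its restrictions
to the indices `i < p+1` resp. `i ≥ p+1`. -/
theorem zero_set_on_model
    (p q : ℕ)
    (ε : Fin (p + q + 2) → ℝ)
    (hεdef : ∀ i : Fin (p + q + 2), ε i = if i.val < p + 1 then -1 else 1)
    (v : Spinor (p + q + 2)) (hv : v ≠ 0)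
    (x : Fin (p + q + 2) → ℝ)
    -- `x ∈ Q̂`, i.e. `|x₁| = |x₂| = 1`
    (hx1 : ∑ i ∈ Finset.univ.filter (fun i : Fin (p + q + 2) => i.val < p + 1),
      x i ^ 2 = 1)
    (hx2 : ∑ i ∈ Finset.univ.filter (fun i : Fin (p + q + 2) => ¬ i.val < p + 1),
      x i ^ 2 = 1)
    -- `x · v = 0`
    (hxv : (cliffR ε x).mulVec v = 0) :
    ∀ y : Fin (p + q + 2) → ℝ,
      ((∑ i ∈ Finset.univ.filter (fun i : Fin (p + q + 2) => i.val < p + 1), y i ^ 2 = 1) ∧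
       (∑ i ∈ Finset.univ.filter (fun i : Fin (p + q + 2) => ¬ i.val < p + 1), y i ^ 2 = 1) ∧
       (cliffR ε y).mulVec v = 0)
      ↔ (y = x ∨ y = -x ∨
          ∃ (t : ℝ) (d : Fin (p + q + 2) → ℝ),
            -- `⟨d₁, x₁⟩ = 0` and `⟨d₂, x₂⟩ = 0` (Euclidean)
            (∑ i ∈ Finset.univ.filter (fun i : Fin (p + q + 2) => i.val < p + 1),
              d i * x i = 0) ∧
            (∑ i ∈ Finset.univ.filter (fun i : Fin (p + q + 2) => ¬ i.val < p + 1),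
              d i * x i = 0) ∧
            -- `|d₁| = |d₂| = 1`
            (∑ i ∈ Finset.univ.filter (fun i : Fin (p + q + 2) => i.val < p + 1),
              d i ^ 2 = 1) ∧
            (∑ i ∈ Finset.univ.filter (fun i : Fin (p + q + 2) => ¬ i.val < p + 1),
              d i ^ 2 = 1) ∧
            -- `d · v = 0`
            (cliffR ε d).mulVec v = 0 ∧
            y = Real.cos t • x + Real.sin t • d) := by
  intro y
  have hε : ∀ i, ε i = 1 ∨ ε i = -1 := fun i => by rw [hεdef]; split_ifs <;> simp
  let K := LinearMap.ker (cliffMulVec ε v)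
  have hxK : x ∈ K := hxv
  constructor
  · rintro ⟨hy1, hy2, hyv⟩
    have hyx := ipR_eq_zero_of_mulVec_eq_zero hε hv hyv hxv
    rw [ipR_eq_neg_sum_add_sum hεdef] at hyx
    exact eq_or_eq_neg_or_exists_great_circle _ K hx1 hx2 hy1 hy2 hxK hyv (by linarith)
  · rintro (rfl | rfl | ⟨t, d, hdx1, hdx2, hd1, hd2, hdv, rfl⟩)
    · exact ⟨hx1, hx2, hxv⟩
    · exact ⟨by simpa using hx1, by simpa using hx2, K.neg_mem hxK⟩
    · exact ⟨sum_sq_cos_smul_add_sin_smul hx1 hd1 hdx1 t,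
        sum_sq_cos_smul_add_sin_smul hx2 hd2 hdx2 t,
        K.add_mem (K.smul_mem _ hxK) (K.smul_mem _ hdv)⟩

end

end Paper
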